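/- arXiv:math/9408208 — 6 statements merged into one kernel-verified Lean document; each statement's English description precedes it below -/
import Mathlib

section
/- Pelczynski decomposition method: if E and F are Banach spaces, each isomorphic to a complemented subspace of the other, and both E and F are isomorphic to their squares E ⊕ E and F ⊕ F respectively, then E and F are isomorphic. -/
/-!
If `E` is complemented in `F`, say `F ≃ E × K`, and `E ≃ E × E`, then
`F ≃ (E × E) × K ≃ E × (E × K) ≃ E × F`: the square absorbs one extra copy of `E`.
Doing this in both directions gives `E ≃ F × E ≃ E × F ≃ F`.
-/

namespace ContinuousLinearEquiv

variable {R : Type*} [Ring R]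
  {E : Type*} [TopologicalSpace E] [AddCommGroup E] [Module R E]
  {F : Type*} [TopologicalSpace F] [AddCommGroup F] [Module R F] [IsTopologicalAddGroup F]

def equivProdOfComplementedOfSquare (S : E →L[R] F) (P : F →L[R] E)
    (hSP : Function.LeftInverse P S) (e : E ≃L[R] E × E) : F ≃L[R] E × F :=
  let split := equivOfRightInverse P S hSP
  split.trans <| (e.prodCongr (ContinuousLinearEquiv.refl R _)).trans <|
    (prodAssoc R E E _).trans <| (ContinuousLinearEquiv.refl R E).prodCongr split.symm

end ContinuousLinearEquiv

theorem pelczynski_decomposition_squares_general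
    (E F : Type*) [NormedAddCommGroup E] [NormedSpace ℝ E]
    [NormedAddCommGroup F] [NormedSpace ℝ F]
    (S : E →L[ℝ] F) (P : F →L[ℝ] E) (hSP : ∀ x, P (S x) = x)
    (S' : F →L[ℝ] E) (P' : E →L[ℝ] F) (hSP' : ∀ y, P' (S' y) = y)
    (hEsq : Nonempty (E ≃L[ℝ] (E × E))) (hFsq : Nonempty (F ≃L[ℝ] (F × F))) :
    Nonempty (E ≃L[ℝ] F) := by
  obtain ⟨eE⟩ := hEsq
  obtain ⟨eF⟩ := hFsq
  have hF : F ≃L[ℝ] E × F := .equivProdOfComplementedOfSquare S P hSP eE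
  have hE : E ≃L[ℝ] F × E := .equivProdOfComplementedOfSquare S' P' hSP' eF
  exact ⟨hE.trans <| (ContinuousLinearEquiv.prodComm ℝ F E).trans hF.symm⟩

/-- Pelczynski decomposition method: if Banach spaces `E` and `F` are each isomorphic to a
complemented subspace of the other, and both are isomorphic to their squares, then `E ∼ F`. -/
theorem pelczynski_decomposition_squares
    (E F : Type*) [NormedAddCommGroup E] [NormedSpace ℝ E] [CompleteSpace E]
    [NormedAddCommGroup F] [NormedSpace ℝ F] [CompleteSpace F]
    (S : E →L[ℝ] F) (P : F →L[ℝ] E) (hSP : ∀ x, P (S x) = x)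
    (S' : F →L[ℝ] E) (P' : E →L[ℝ] F) (hSP' : ∀ y, P' (S' y) = y)
    (hEsq : Nonempty (E ≃L[ℝ] (E × E))) (hFsq : Nonempty (F ≃L[ℝ] (F × F))) :
    Nonempty (E ≃L[ℝ] F) :=
  pelczynski_decomposition_squares_general E F S P hSP S' P' hSP' hEsq hFsq
end

section
/- Let σ : ℤ → (0,∞) be σ(n) = 2^n, and let μ be the atomic measure on ℤ with μ{n} = 2^n. Then the map T : ℓ^{p,∞}(ℤ,σ) → ℓ^∞ defined by T((a_n)_{n∈ℤ}) = (2^{n/p} a_n)_{n∈ℤ} is a surjective isomorphism; specifically, ‖T a‖_∞ ≤ ‖a‖ and ‖a‖ ≤ 2^{1/p} ‖T a‖_∞ for all a ∈ ℓ^{p,∞}(ℤ,σ). -/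
open ENNReal

/-- The weak `ℓ^p` quasi-norm on `ℤ` with the atomic measure `μ{n} = 2^n`. -/
noncomputable def weakNormZ (p : ℝ) (a : ℤ → ℝ) : ℝ≥0∞ :=
  ⨆ (c : ℝ) (_ : 0 < c),
    ENNReal.ofReal c * (∑' n : {n : ℤ // c < |a n|}, (2 : ℝ≥0∞) ^ (n.1 : ℤ)) ^ ((1 : ℝ)/p)

/-!
Write `M = sup_n 2^{n/p} |a_n|`. The single atom `n` of `{m : |a_m| > c}` already gives
`c 2^{n/p} ≤ ‖a‖` for every `c < |a_n|`, hence `‖Ta‖_∞ ≤ ‖a‖`. Conversely, `c 2^{n/p} ≤ M` on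
`{n : |a_n| > c}`, so this set has a largest element `N`; its measure is at most
`∑_{n ≤ N} 2^n = 2^{N+1}`, whence `c μ^{1/p} ≤ 2^{1/p} c 2^{N/p} ≤ 2^{1/p} M`.
Surjectivity follows by applying the second bound to `a_n = 2^{-n/p} c_n`.
-/

open Filter Topology

lemma tsum_two_zpow_subtype_le (N : ℤ) :
    ∑' n : {n : ℤ // n ≤ N}, (2 : ℝ≥0∞) ^ (n : ℤ) = 2 ^ (N + 1) := by
  let e : ℕ ≃ {n : ℤ // n ≤ N} :=
    { toFun := fun k => ⟨N - k, by omega⟩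
      invFun := fun n => (N - n).toNat
      left_inv := fun k => by simp
      right_inv := fun n => Subtype.ext (by have := n.2; simp only; omega) }
  have he : ∀ k : ℕ, (2 : ℝ≥0∞) ^ (e k : ℤ) = 2 ^ N * 2⁻¹ ^ k := fun k => by
    rw [show (e k : ℤ) = N + -(k : ℤ) from sub_eq_add_neg _ _,
      ENNReal.zpow_add two_ne_zero ofNat_ne_top, ENNReal.zpow_neg, zpow_natCast, ENNReal.inv_pow]
  rw [← e.tsum_eq, tsum_congr he, ENNReal.tsum_mul_left, ENNReal.tsum_geometric,
    ENNReal.one_sub_inv_two, inv_inv, ENNReal.zpow_add two_ne_zero ofNat_ne_top, zpow_one]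

lemma tsum_two_zpow_le_of_forall_le {P : ℤ → Prop} {N : ℤ} (hP : ∀ n, P n → n ≤ N) :
    ∑' n : {n : ℤ // P n}, (2 : ℝ≥0∞) ^ (n : ℤ) ≤ 2 ^ (N + 1) :=
  tsum_two_zpow_subtype_le N ▸ tsum_comp_le_tsum_of_injective
    (f := fun n : {n : ℤ // P n} => (⟨n, hP n n.2⟩ : {n : ℤ // n ≤ N}))
    (fun _ _ h => Subtype.ext (Subtype.mk.inj h)) (fun n => (2 : ℝ≥0∞) ^ (n : ℤ))

lemma two_zpow_rpow_one_div (m : ℤ) (p : ℝ) :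
    ((2 : ℝ≥0∞) ^ m) ^ (1 / p) = 2 ^ ((m : ℝ) / p) := by
  rw [← ENNReal.rpow_intCast, ← ENNReal.rpow_mul, mul_one_div]

lemma ofReal_abs_two_rpow_mul (x y : ℝ) :
    ENNReal.ofReal |(2 : ℝ) ^ x * y| = 2 ^ x * ENNReal.ofReal |y| := by
  rw [abs_mul, abs_of_pos (by positivity), ENNReal.ofReal_mul (by positivity),
    ← ENNReal.ofReal_rpow_of_pos two_pos, ENNReal.ofReal_ofNat]

section

variable {p : ℝ}

lemma bddAbove_setOf_two_rpow_le (hp : 0 < p) {B : ℝ≥0∞} (hB : B ≠ ⊤) :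
    BddAbove {n : ℤ | (2 : ℝ≥0∞) ^ ((n : ℝ) / p) ≤ B} := by
  have hlim : Tendsto (fun n : ℤ => (2 : ℝ≥0∞) ^ ((n : ℝ) / p)) atTop (𝓝 ⊤) :=
    (ENNReal.tendsto_rpow_atTop_of_one_lt_base one_lt_two).comp
      (tendsto_intCast_atTop_atTop.atTop_div_const hp)
  obtain ⟨N, hN⟩ := eventually_atTop.1 (hlim.eventually (lt_mem_nhds hB.lt_top))
  exact ⟨N, fun n hn => le_of_not_gt fun h => (hN n h.le).not_ge hn⟩

lemma le_weakNormZ (a : ℤ → ℝ) {c : ℝ} (hc : 0 < c) :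
    ENNReal.ofReal c * (∑' n : {n : ℤ // c < |a n|}, (2 : ℝ≥0∞) ^ (n : ℤ)) ^ (1 / p) ≤
      weakNormZ p a :=
  le_iSup₂ (f := fun (c : ℝ) (_ : 0 < c) =>
    ENNReal.ofReal c * (∑' n : {n : ℤ // c < |a n|}, (2 : ℝ≥0∞) ^ (n : ℤ)) ^ (1 / p)) c hc

lemma two_rpow_mul_ofReal_abs_le_weakNormZ (hp : 0 < p) (a : ℤ → ℝ) (n : ℤ) :
    2 ^ ((n : ℝ) / p) * ENNReal.ofReal |a n| ≤ weakNormZ p a := by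
  rcases (abs_nonneg (a n)).eq_or_lt with h | h
  · simp [← h]
  have hlim : Tendsto (fun c => 2 ^ ((n : ℝ) / p) * ENNReal.ofReal c) (𝓝[<] |a n|)
      (𝓝 (2 ^ ((n : ℝ) / p) * ENNReal.ofReal |a n|)) :=
    ((ENNReal.continuous_const_mul (by simp)).comp
      ENNReal.continuous_ofReal).continuousAt.tendsto.mono_left nhdsWithin_le_nhds
  refine le_of_tendsto hlim ?_
  filter_upwards [Ioo_mem_nhdsLT h] with c ⟨hc, hca⟩
  calc 2 ^ ((n : ℝ) / p) * ENNReal.ofReal c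
      = ENNReal.ofReal c * ((2 : ℝ≥0∞) ^ n) ^ (1 / p) := by
        rw [two_zpow_rpow_one_div, mul_comm]
    _ ≤ ENNReal.ofReal c * (∑' m : {m : ℤ // c < |a m|}, (2 : ℝ≥0∞) ^ (m : ℤ)) ^ (1 / p) := by
        gcongr
        exact ENNReal.le_tsum (⟨n, hca⟩ : {m : ℤ // c < |a m|})
    _ ≤ weakNormZ p a := le_weakNormZ a hc

lemma weakNormZ_le (hp : 0 < p) (a : ℤ → ℝ) {M : ℝ≥0∞}
    (hM : ∀ n : ℤ, 2 ^ ((n : ℝ) / p) * ENNReal.ofReal |a n| ≤ M) :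
    weakNormZ p a ≤ 2 ^ (1 / p) * M := by
  rcases eq_or_ne M ⊤ with rfl | hM_top
  · simp [ENNReal.mul_top]
  refine iSup₂_le fun c hc => ?_
  rcases {n : ℤ | c < |a n|}.eq_empty_or_nonempty with hS | hS
  · have : IsEmpty {n : ℤ // c < |a n|} := ⟨fun n => hS.subset n.2⟩
    simp [ENNReal.zero_rpow_of_pos (inv_pos.2 hp)]
  have hcM : ∀ n : ℤ, c < |a n| → 2 ^ ((n : ℝ) / p) * ENNReal.ofReal c ≤ M := fun n hn =>
    le_trans (by gcongr) (hM n)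
  have hbdd : BddAbove {n : ℤ | c < |a n|} :=
    (bddAbove_setOf_two_rpow_le hp (ENNReal.div_ne_top hM_top (by simpa))).mono fun n hn =>
      (ENNReal.le_div_iff_mul_le (by simp [hc]) (by simp)).2 (hcM n hn)
  have hN := Int.csSup_mem hS hbdd
  calc ENNReal.ofReal c * (∑' n : {n : ℤ // c < |a n|}, (2 : ℝ≥0∞) ^ (n : ℤ)) ^ (1 / p)
      ≤ ENNReal.ofReal c * ((2 : ℝ≥0∞) ^ (sSup {n : ℤ | c < |a n|} + 1)) ^ (1 / p) := by
        gcongr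
        exact tsum_two_zpow_le_of_forall_le fun n hn => le_csSup hbdd hn
    _ = 2 ^ (1 / p) * (2 ^ ((sSup {n : ℤ | c < |a n|} : ℤ) / p) * ENNReal.ofReal c) := by
        rw [two_zpow_rpow_one_div, Int.cast_add, Int.cast_one, add_div,
          ENNReal.rpow_add _ _ two_ne_zero ofNat_ne_top]
        ring
    _ ≤ 2 ^ (1 / p) * M := by gcongr; exact hcM _ hN

end

/-- `T((a_n)) = (2^{n/p} a_n)` is a surjective isomorphism from `ℓ^{p,∞}(ℤ,σ)` onto `ℓ^∞(ℤ)`: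
`‖Ta‖_∞ ≤ ‖a‖`, `‖a‖ ≤ 2^{1/p} ‖Ta‖_∞`, and every bounded sequence is in the range of `T`. -/
theorem weakZ_iso_linfty (p : ℝ) (hp : 1 < p) :
    (∀ a : ℤ → ℝ, weakNormZ p a ≠ ⊤ →
      (⨆ n : ℤ, ENNReal.ofReal |(2 : ℝ) ^ ((n : ℝ)/p) * a n|) ≤ weakNormZ p a ∧
      weakNormZ p a ≤
        (2 : ℝ≥0∞) ^ ((1 : ℝ)/p) * ⨆ n : ℤ, ENNReal.ofReal |(2 : ℝ) ^ ((n : ℝ)/p) * a n|) ∧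
    (∀ c : ℤ → ℝ, (⨆ n : ℤ, ENNReal.ofReal |c n|) ≠ ⊤ →
      ∃ a : ℤ → ℝ, weakNormZ p a ≠ ⊤ ∧ ∀ n : ℤ, (2 : ℝ) ^ ((n : ℝ)/p) * a n = c n) := by
  have hp₀ : 0 < p := one_pos.trans hp
  refine ⟨fun a _ => ⟨iSup_le fun n => ?_, weakNormZ_le hp₀ a fun n => ?_⟩, fun c hc => ?_⟩
  · rw [ofReal_abs_two_rpow_mul]
    exact two_rpow_mul_ofReal_abs_le_weakNormZ hp₀ a n
  · rw [← ofReal_abs_two_rpow_mul]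
    exact le_iSup (fun n : ℤ => ENNReal.ofReal |(2 : ℝ) ^ ((n : ℝ) / p) * a n|) n
  have hT : ∀ n : ℤ, (2 : ℝ) ^ ((n : ℝ) / p) * (c n / 2 ^ ((n : ℝ) / p)) = c n := fun n =>
    mul_div_cancel₀ _ (by positivity)
  have hbound := weakNormZ_le hp₀ (fun n => c n / 2 ^ ((n : ℝ) / p))
    (M := ⨆ n : ℤ, ENNReal.ofReal |c n|) fun n => by
      rw [← ofReal_abs_two_rpow_mul, hT]
      exact le_iSup (fun n : ℤ => ENNReal.ofReal |c n|) n
  exact ⟨_, ne_top_of_le_ne_top (ENNReal.mul_ne_top (by simp) hc) hbound, hT⟩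
end

section
/- Let D = {(i,j) ∈ ℕ×ℕ : i ≥ j ≥ 1} and let (b_i) be a strictly positive sequence with (i+1)·b_{i+1} ≤ b_i for all i. If B ⊆ D is a finite nonempty set with B_i := B ∩ ({i}×{1,...,i}), and i_1 is the smallest index with B_{i_1} ≠ ∅, then ∑_i b_i |B_i| ≤ 3 b_{i_1} |B_{i_1}|. -/
/-!
Group the terms by rows. Row `i` has at most `i` points, so every row after the first
contributes at most `i b_i`, and for `j ≥ 1` the decay `(i+1) b_{i+1} ≤ b_i` makes
`∑_{i > j} i b_i ≤ 2 b_j`. The first row contributes `b_{i₁} |B_{i₁}| ≥ b_{i₁}`.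
-/

open Finset

section Decay

variable {b : ℕ → ℝ} (hb : ∀ i, 0 ≤ b i) (hdec : ∀ i : ℕ, ((i : ℝ) + 1) * b (i + 1) ≤ b i)
include hb hdec

/-- The invariant of the induction: `(n+3) b_{n+1} ≤ 2 (n+1) b_{n+1} ≤ 2 b_n` once `n ≥ 1`. -/
lemma sum_Ioc_mul_add_two_mul_le {j : ℕ} (hj : 1 ≤ j) {n : ℕ} (hjn : j ≤ n) :
    ∑ i ∈ Ioc j n, b i * i + 2 * b n ≤ 2 * b j := by
  induction n, hjn using Nat.le_induction with
  | base => simp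
  | succ n hjn ih =>
    have hn : (1 : ℝ) ≤ n := by exact_mod_cast hj.trans hjn
    rw [sum_Ioc_succ_top hjn]
    push_cast
    nlinarith [hdec n, hb (n + 1)]

lemma sum_Ioc_mul_le_two_mul {j : ℕ} (hj : 1 ≤ j) (n : ℕ) :
    ∑ i ∈ Ioc j n, b i * i ≤ 2 * b j := by
  rcases le_total j n with hjn | hnj
  · linarith [sum_Ioc_mul_add_two_mul_le hb hdec hj hjn, hb n]
  · simp [Ioc_eq_empty_of_le hnj, hb j]

end Decay

lemma card_filter_fst_eq_le {B : Finset (ℕ × ℕ)} (hB : ∀ q ∈ B, 1 ≤ q.2 ∧ q.2 ≤ q.1) (i : ℕ) :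
    (B.filter fun q => q.1 = i).card ≤ i := by
  have hsub : (B.filter fun q => q.1 = i) ⊆ {i} ×ˢ Icc 1 i := by
    intro q hq
    obtain ⟨hqB, rfl⟩ := mem_filter.mp hq
    simpa using hB q hqB
  simpa using card_le_card hsub

lemma sum_comp_fst_eq_sum_mul_card {B : Finset (ℕ × ℕ)} {s : Finset ℕ}
    (hs : ∀ q ∈ B, q.1 ∈ s) (b : ℕ → ℝ) :
    ∑ q ∈ B, b q.1 = ∑ i ∈ s, b i * (B.filter fun q => q.1 = i).card := by
  rw [← sum_fiberwise_of_maps_to hs]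
  refine sum_congr rfl fun i _ => ?_
  rw [sum_congr rfl fun q hq => congrArg b (mem_filter.mp hq).2, sum_const, nsmul_eq_mul,
    mul_comm]

theorem row_sum_le_three_first_row_general (b : ℕ → ℝ) (hb : ∀ i, 0 < b i)
    (hdec : ∀ i : ℕ, ((i : ℝ) + 1) * b (i + 1) ≤ b i)
    (B : Finset (ℕ × ℕ)) (hB : ∀ q ∈ B, 1 ≤ q.2 ∧ q.2 ≤ q.1)
    (i₁ : ℕ) (hi₁ : (B.filter fun q => q.1 = i₁).Nonempty)
    (hmin : ∀ i < i₁, (B.filter fun q => q.1 = i) = ∅) :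
    ∑ q ∈ B, b q.1 ≤ 3 * b i₁ * ((B.filter fun q => q.1 = i₁).card : ℝ) := by
  set N := B.sup Prod.fst
  have hrows : ∀ q ∈ B, q.1 ∈ Icc i₁ N := by
    intro q hq
    refine mem_Icc.mpr ⟨not_lt.mp fun h => ?_, le_sup (f := Prod.fst) hq⟩
    exact eq_empty_iff_forall_notMem.mp (hmin q.1 h) q (mem_filter.mpr ⟨hq, rfl⟩)
  obtain ⟨q₀, hq₀⟩ := hi₁
  have hq₀B := mem_filter.mp hq₀
  have hi₁N : i₁ ≤ N := hq₀B.2 ▸ (mem_Icc.mp (hrows q₀ hq₀B.1)).2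
  have hi₁ : 1 ≤ i₁ := by have := hB q₀ hq₀B.1; omega
  have hfirst : (1 : ℝ) ≤ (B.filter fun q => q.1 = i₁).card := by
    exact_mod_cast card_pos.mpr ⟨q₀, hq₀⟩
  have htail : ∑ i ∈ Ioc i₁ N, b i * (B.filter fun q => q.1 = i).card ≤ 2 * b i₁ :=
    calc _ ≤ ∑ i ∈ Ioc i₁ N, b i * i := sum_le_sum fun i _ =>
            mul_le_mul_of_nonneg_left (by exact_mod_cast card_filter_fst_eq_le hB i) (hb i).le
      _ ≤ 2 * b i₁ := sum_Ioc_mul_le_two_mul (fun i => (hb i).le) hdec hi₁ N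
  rw [sum_comp_fst_eq_sum_mul_card hrows, ← sum_Ioc_add_eq_sum_Icc hi₁N]
  nlinarith [hb i₁]

/-- If `(i+1) b_{i+1} ≤ b_i` with `b_i > 0`, `B` is a finite nonempty subset of
`D = {(i,j) : 1 ≤ j ≤ i}`, and `i₁` is the smallest index whose row `B_{i₁}` is nonempty,
then `∑_i b_i |B_i| ≤ 3 b_{i₁} |B_{i₁}|`. -/
theorem row_sum_le_three_first_row (b : ℕ → ℝ) (hb : ∀ i, 0 < b i)
    (hdec : ∀ i : ℕ, ((i : ℝ) + 1) * b (i + 1) ≤ b i)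
    (B : Finset (ℕ × ℕ)) (hB : ∀ q ∈ B, 1 ≤ q.2 ∧ q.2 ≤ q.1) (hne : B.Nonempty)
    (i₁ : ℕ) (hi₁ : (B.filter fun q => q.1 = i₁).Nonempty)
    (hmin : ∀ i < i₁, (B.filter fun q => q.1 = i) = ∅) :
    ∑ q ∈ B, b q.1 ≤ 3 * b i₁ * ((B.filter fun q => q.1 = i₁).card : ℝ) :=
  row_sum_le_three_first_row_general b hb hdec B hB i₁ hi₁ hmin
end

section
/- Let D = {(i,j) : i ≥ j ≥ 1} with weight α(i,j) = b_i where (b_i) is strictly positive and satisfies either (i+1)b_{i+1} ≤ b_i for all i, or b_{i+1} ≥ (i+1)b_i for all i. Then the map T : ℓ^{p,∞}(D,α) → (∑ ⊕ ℓ^{p,∞}(i))_{ℓ^∞} given by (Tx)_i(j) = b_i^{1/p} x(i,j) is a surjective isomorphism. -/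
/-!
Write `N_i(c) = #{j : |x(i,j)| > c}`. The `α`-measure of `{|x| > c}` is `∑ᵢ bᵢ Nᵢ(c)`, while,
after rescaling `c` row by row, the norm of `Tx` is `sup_c c (supᵢ bᵢ Nᵢ(c))^{1/p}`. Both
estimates therefore reduce to `supᵢ bᵢ Nᵢ ≤ ∑ᵢ bᵢ Nᵢ ≤ 3 supᵢ bᵢ Nᵢ` for integers `0 ≤ Nᵢ ≤ i`.
If `(i+1) b_{i+1} ≤ bᵢ`, let `i₀` be the first row with `N_{i₀} ≠ 0`; then `b_{i₀} ≤ sup`, and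
beyond `i₀` we have `bᵢ Nᵢ ≤ i bᵢ ≤ b_{i-1}` while the `bᵢ` decay geometrically with ratio
`1/2`, so the tail is at most `2 b_{i₀}`. If `(i+1) bᵢ ≤ b_{i+1}`, then `∑_{i<n} i bᵢ ≤ bₙ`, so
all rows before the last nonzero one contribute at most its weight.
-/

open ENNReal

/-- The triangular set `D = {(i,j) : 1 ≤ j ≤ i}`. -/
def Tri : Type := {q : ℕ × ℕ // 1 ≤ q.2 ∧ q.2 ≤ q.1}

/-- Weak `ℓ^p` quasi-norm on `D` with weight `α(i,j) = b_i`. -/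
noncomputable def weakNormD (p : ℝ) (b : ℕ → ℝ) (x : Tri → ℝ) : ℝ≥0∞ :=
  ⨆ (c : ℝ) (_ : 0 < c),
    ENNReal.ofReal c *
      (∑' q : {q : Tri // c < |x q|}, ENNReal.ofReal (b q.1.1.1)) ^ ((1 : ℝ)/p)

/-- The norm of `(∑ ⊕ ℓ^{p,∞}(i))_{ℓ^∞}`: the sup over rows `i` of the weak `ℓ^p`
(counting-measure) norm of the `i`-th row. -/
noncomputable def supRowNorm (p : ℝ) (y : Tri → ℝ) : ℝ≥0∞ :=
  ⨆ i : ℕ, ⨆ (c : ℝ) (_ : 0 < c),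
    ENNReal.ofReal c *
      (∑' _ : {q : Tri // q.1.1 = i ∧ c < |y q|}, (1 : ℝ≥0∞)) ^ ((1 : ℝ)/p)

theorem ENNReal.tsum_ofReal_le_two_mul_of_two_mul_succ_le {u : ℕ → ℝ}
    (hu : ∀ k, 2 * u (k + 1) ≤ u k) : ∑' k, ENNReal.ofReal (u k) ≤ 2 * ENNReal.ofReal (u 0) := by
  have hgeom (k : ℕ) : ENNReal.ofReal (u k) ≤ ENNReal.ofReal (u 0) * 2⁻¹ ^ k := by
    calc ENNReal.ofReal (u k) ≤ ENNReal.ofReal ((2⁻¹) ^ k * u 0) :=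
          ENNReal.ofReal_le_ofReal (le_geom (by norm_num) k fun j _ => by linarith [hu j])
      _ = ENNReal.ofReal (u 0) * 2⁻¹ ^ k := by
          rw [ENNReal.ofReal_mul (by positivity), ENNReal.ofReal_pow (by norm_num),
            ENNReal.ofReal_inv_of_pos (by norm_num), ENNReal.ofReal_ofNat, mul_comm]
  calc ∑' k, ENNReal.ofReal (u k) ≤ ∑' k, ENNReal.ofReal (u 0) * 2⁻¹ ^ k :=
        ENNReal.tsum_le_tsum hgeom
    _ = 2 * ENNReal.ofReal (u 0) := by
        rw [ENNReal.tsum_mul_left, ENNReal.tsum_geometric, ENNReal.one_sub_inv_two, inv_inv,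
          mul_comm]

theorem ENNReal.iSup_rpow {ι : Sort*} {z : ℝ} (hz : 0 < z) (f : ι → ℝ≥0∞) :
    (⨆ i, f i) ^ z = ⨆ i, f i ^ z :=
  (ENNReal.orderIsoRpow z hz).map_iSup f

theorem iSup_pos_eq_iSup_pos_mul {α : Type*} [CompleteLattice α] {a : ℝ} (ha : 0 < a)
    (φ : ℝ → α) : ⨆ (c : ℝ) (_ : 0 < c), φ c = ⨆ (c : ℝ) (_ : 0 < c), φ (c * a) := by
  refine le_antisymm (iSup₂_le fun c hc => ?_) (iSup₂_le fun c hc => ?_)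
  · exact le_iSup₂_of_le (c / a) (div_pos hc ha) (by rw [div_mul_cancel₀ c ha.ne'])
  · exact le_iSup₂ (f := fun c (_ : 0 < c) => φ c) (c * a) (mul_pos hc ha)

section RowWeights

variable {b : ℕ → ℝ} {N : ℕ → ℕ∞}

theorem ofReal_mul_le_ofReal_natCast_mul (hN : ∀ i, N i ≤ i) (i : ℕ) :
    ENNReal.ofReal (b i) * N i ≤ ENNReal.ofReal (i * b i) := by
  rw [ENNReal.ofReal_mul (Nat.cast_nonneg i), ENNReal.ofReal_natCast, mul_comm]
  gcongr
  exact_mod_cast hN i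

theorem ofReal_le_iSup_ofReal_mul {i : ℕ} (hi : N i ≠ 0) :
    ENNReal.ofReal (b i) ≤ ⨆ j, ENNReal.ofReal (b j) * N j := by
  calc ENNReal.ofReal (b i) = ENNReal.ofReal (b i) * (1 : ℕ∞) := by simp
    _ ≤ ENNReal.ofReal (b i) * N i := by gcongr; exact_mod_cast Order.one_le_iff_ne_zero.mpr hi
    _ ≤ ⨆ j, ENNReal.ofReal (b j) * N j := le_iSup (fun j => ENNReal.ofReal (b j) * N j) i

theorem tsum_ofReal_mul_le_three_mul_iSup_of_succ_mul_le (hb : ∀ i, 0 ≤ b i)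
    (hdec : ∀ i : ℕ, ((i : ℝ) + 1) * b (i + 1) ≤ b i) (hN : ∀ i, N i ≤ i) :
    ∑' i, ENNReal.ofReal (b i) * N i ≤ 3 * ⨆ i, ENNReal.ofReal (b i) * N i := by
  by_cases hzero : ∃ i, N i ≠ 0
  swap
  · simp only [not_exists, not_not] at hzero
    simp [hzero]
  classical
  set f := fun i => ENNReal.ofReal (b i) * N i
  set M := ⨆ i, f i
  set i₀ := Nat.find hzero
  have hi₀ : N i₀ ≠ 0 := Nat.find_spec hzero
  have hi₀_pos : 1 ≤ i₀ := Nat.one_le_iff_ne_zero.mpr fun h => hi₀ (by simpa [h] using hN i₀)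
  have hhead : ∑ i ∈ Finset.range i₀, f i = 0 :=
    Finset.sum_eq_zero fun i hi => by
      simp [f, not_not.mp (Nat.find_min hzero (Finset.mem_range.mp hi))]
  have htail : ∑' k, f (k + 1 + i₀) ≤ 2 * M := by
    calc ∑' k, f (k + 1 + i₀) ≤ ∑' k, ENNReal.ofReal (b (i₀ + k)) := by
          refine ENNReal.tsum_le_tsum fun k => (ofReal_mul_le_ofReal_natCast_mul hN _).trans ?_
          refine ENNReal.ofReal_le_ofReal ?_
          simpa [add_comm, add_left_comm, add_assoc] using hdec (i₀ + k)
      _ ≤ 2 * ENNReal.ofReal (b i₀) := by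
          refine ENNReal.tsum_ofReal_le_two_mul_of_two_mul_succ_le fun k => ?_
          have h := hdec (i₀ + k)
          have h1 : (1 : ℝ) ≤ ((i₀ + k : ℕ) : ℝ) := by exact_mod_cast hi₀_pos.trans (by omega)
          rw [← add_assoc]
          nlinarith [hb (i₀ + k + 1)]
      _ ≤ 2 * M := by gcongr; exact ofReal_le_iSup_ofReal_mul hi₀
  calc ∑' i, f i = ∑ i ∈ Finset.range i₀, f i + ∑' k, f (k + i₀) :=
        (ENNReal.summable.sum_add_tsum_nat_add' (k := i₀)).symm
    _ = f i₀ + ∑' k, f (k + 1 + i₀) := by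
        rw [hhead, zero_add, tsum_eq_zero_add' ENNReal.summable, zero_add]
    _ ≤ M + 2 * M := add_le_add (le_iSup f i₀) htail
    _ = 3 * M := by ring

theorem sum_range_ofReal_mul_le_of_mul_le_succ (hb : ∀ i, 0 ≤ b i)
    (hinc : ∀ i : ℕ, ((i : ℝ) + 1) * b i ≤ b (i + 1)) (hN : ∀ i, N i ≤ i) (n : ℕ) :
    ∑ i ∈ Finset.range n, ENNReal.ofReal (b i) * N i ≤ ENNReal.ofReal (b n) ∧
      ∑ i ∈ Finset.range n, ENNReal.ofReal (b i) * N i ≤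
        2 * ⨆ i, ENNReal.ofReal (b i) * N i := by
  induction n with
  | zero => simp
  | succ n ih =>
    rw [Finset.sum_range_succ]
    refine ⟨?_, ?_⟩
    · calc _ ≤ ENNReal.ofReal (b n) + ENNReal.ofReal (n * b n) :=
            add_le_add ih.1 (ofReal_mul_le_ofReal_natCast_mul hN n)
        _ = ENNReal.ofReal (((n : ℝ) + 1) * b n) := by
            rw [← ENNReal.ofReal_add (hb n) (mul_nonneg n.cast_nonneg (hb n))]; ring_nf
        _ ≤ ENNReal.ofReal (b (n + 1)) := ENNReal.ofReal_le_ofReal (hinc n)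
    · by_cases hn : N n = 0
      · simpa [hn] using ih.2
      · calc _ ≤ ENNReal.ofReal (b n) + ⨆ i, ENNReal.ofReal (b i) * N i :=
              add_le_add ih.1 (le_iSup (fun i => ENNReal.ofReal (b i) * N i) n)
          _ ≤ 2 * ⨆ i, ENNReal.ofReal (b i) * N i := by
              rw [two_mul]; gcongr; exact ofReal_le_iSup_ofReal_mul hn

theorem tsum_ofReal_mul_le_three_mul_iSup (hb : ∀ i, 0 ≤ b i)
    (hcond : (∀ i : ℕ, ((i : ℝ) + 1) * b (i + 1) ≤ b i) ∨
      (∀ i : ℕ, ((i : ℝ) + 1) * b i ≤ b (i + 1))) (hN : ∀ i, N i ≤ i) :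
    ∑' i, ENNReal.ofReal (b i) * N i ≤ 3 * ⨆ i, ENNReal.ofReal (b i) * N i := by
  rcases hcond with hdec | hinc
  · exact tsum_ofReal_mul_le_three_mul_iSup_of_succ_mul_le hb hdec hN
  · refine ENNReal.tsum_le_of_sum_range_le fun n =>
      (sum_range_ofReal_mul_le_of_mul_le_succ hb hinc hN n).2.trans ?_
    gcongr
    norm_num

end RowWeights

noncomputable def rowCount (x : Tri → ℝ) (c : ℝ) (i : ℕ) : ℕ∞ :=
  ENat.card {q : Tri // q.1.1 = i ∧ c < |x q|}

theorem rowCount_le (x : Tri → ℝ) (c : ℝ) (i : ℕ) : rowCount x c i ≤ i := by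
  let col : {q : Tri // q.1.1 = i ∧ c < |x q|} → Fin i := fun q =>
    ⟨q.1.1.2 - 1, by have := q.1.2; have := q.2.1; omega⟩
  have hcol : Function.Injective col := by
    intro q r h
    have hj : q.1.1.2 = r.1.1.2 := by
      have := q.1.2; have := r.1.2; simp only [col, Fin.mk.injEq] at h; omega
    exact Subtype.ext (Subtype.ext (Prod.ext (q.2.1.trans r.2.1.symm) hj))
  exact (ENat.card_le_card_of_injective hcol).trans (by simp)

theorem rowCount_mul_left {w : ℕ → ℝ} (hw : ∀ i, 0 < w i) (x : Tri → ℝ) (c : ℝ) (i : ℕ) :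
    rowCount (fun q => w q.1.1 * x q) (c * w i) i = rowCount x c i := by
  unfold rowCount
  congr! 3 with q
  refine and_congr_right fun hq => ?_
  subst hq
  rw [abs_mul, abs_of_pos (hw _), mul_comm c, mul_lt_mul_iff_right₀ (hw _)]

theorem tsum_ofReal_eq_tsum_ofReal_mul_rowCount (b : ℕ → ℝ) (x : Tri → ℝ) (c : ℝ) :
    ∑' q : {q : Tri // c < |x q|}, ENNReal.ofReal (b q.1.1.1) =
      ∑' i, ENNReal.ofReal (b i) * rowCount x c i := by
  rw [← ENNReal.tsum_fiberwise _ fun q : {q : Tri // c < |x q|} => q.1.1.1]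
  refine tsum_congr fun i => ?_
  have hfiber : ((fun q : {q : Tri // c < |x q|} => q.1.1.1) ⁻¹' {i}) ≃
      {q : Tri // q.1.1 = i ∧ c < |x q|} :=
    (Equiv.subtypeSubtypeEquivSubtypeInter (fun q : Tri => c < |x q|) (·.1.1 = i)).trans
      (Equiv.subtypeEquivRight fun _ => and_comm)
  calc ∑' q : (fun q : {q : Tri // c < |x q|} => q.1.1.1) ⁻¹' {i}, ENNReal.ofReal (b q.1.1.1.1)
      = ∑' _ : (fun q : {q : Tri // c < |x q|} => q.1.1.1) ⁻¹' {i}, ENNReal.ofReal (b i) :=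
        tsum_congr fun q => by rw [show q.1.1.1.1 = i from q.2]
    _ = ENNReal.ofReal (b i) * rowCount x c i := by
        rw [ENNReal.tsum_const, ENat.card_congr hfiber, mul_comm]; rfl

theorem weakNormD_eq_iSup (p : ℝ) (b : ℕ → ℝ) (x : Tri → ℝ) :
    weakNormD p b x = ⨆ (c : ℝ) (_ : 0 < c),
      ENNReal.ofReal c * (∑' i, ENNReal.ofReal (b i) * rowCount x c i) ^ ((1 : ℝ)/p) := by
  simp only [weakNormD, tsum_ofReal_eq_tsum_ofReal_mul_rowCount]

theorem supRowNorm_mul_eq_iSup {p : ℝ} (hp : 0 < p) {b : ℕ → ℝ} (hb : ∀ i, 0 < b i)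
    (x : Tri → ℝ) :
    supRowNorm p (fun q => b q.1.1 ^ ((1 : ℝ)/p) * x q) = ⨆ (c : ℝ) (_ : 0 < c),
      ENNReal.ofReal c * (⨆ i, ENNReal.ofReal (b i) * rowCount x c i) ^ ((1 : ℝ)/p) := by
  have hβ (i : ℕ) : 0 < b i ^ ((1 : ℝ)/p) := Real.rpow_pos_of_pos (hb i) _
  have hrow (i : ℕ) (c : ℝ) (hc : 0 < c) :
      ENNReal.ofReal (c * b i ^ ((1 : ℝ)/p)) *
          (rowCount (fun q => b q.1.1 ^ ((1 : ℝ)/p) * x q) (c * b i ^ ((1 : ℝ)/p)) i :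
            ℝ≥0∞) ^ ((1 : ℝ)/p) =
        ENNReal.ofReal c * (ENNReal.ofReal (b i) * rowCount x c i) ^ ((1 : ℝ)/p) := by
    rw [rowCount_mul_left hβ, ENNReal.ofReal_mul hc.le, ← ENNReal.ofReal_rpow_of_pos (hb i),
      ENNReal.mul_rpow_of_nonneg _ _ (by positivity), mul_assoc]
  calc supRowNorm p (fun q => b q.1.1 ^ ((1 : ℝ)/p) * x q)
      = ⨆ (i : ℕ) (c : ℝ) (_ : 0 < c), ENNReal.ofReal c *
          (rowCount (fun q => b q.1.1 ^ ((1 : ℝ)/p) * x q) c i : ℝ≥0∞) ^ ((1 : ℝ)/p) := by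
        simp only [supRowNorm, ENNReal.tsum_one, rowCount]
    _ = ⨆ (i : ℕ) (c : ℝ) (_ : 0 < c),
          ENNReal.ofReal c * (ENNReal.ofReal (b i) * rowCount x c i) ^ ((1 : ℝ)/p) := by
        refine iSup_congr fun i => ?_
        rw [iSup_pos_eq_iSup_pos_mul (hβ i)]
        exact iSup_congr fun c => iSup_congr (hrow i c)
    _ = _ := by
        rw [iSup_comm]
        refine iSup_congr fun c => ?_
        rw [iSup_comm, ENNReal.iSup_rpow (by positivity), ENNReal.mul_iSup]

theorem weakNormD_le_three_rpow_mul_supRowNorm {p : ℝ} (hp : 0 < p) {b : ℕ → ℝ}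
    (hb : ∀ i, 0 < b i)
    (hcond : (∀ i : ℕ, ((i : ℝ) + 1) * b (i + 1) ≤ b i) ∨
      (∀ i : ℕ, ((i : ℝ) + 1) * b i ≤ b (i + 1))) (x : Tri → ℝ) :
    weakNormD p b x ≤
      (3 : ℝ≥0∞) ^ ((1 : ℝ)/p) * supRowNorm p (fun q => b q.1.1 ^ ((1 : ℝ)/p) * x q) := by
  rw [weakNormD_eq_iSup, supRowNorm_mul_eq_iSup hp hb]
  simp_rw [ENNReal.mul_iSup]
  refine iSup₂_mono fun c _ => ?_
  calc ENNReal.ofReal c * (∑' i, ENNReal.ofReal (b i) * rowCount x c i) ^ ((1 : ℝ)/p)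
      ≤ ENNReal.ofReal c * (3 * ⨆ i, ENNReal.ofReal (b i) * rowCount x c i) ^ ((1 : ℝ)/p) := by
        gcongr
        exact tsum_ofReal_mul_le_three_mul_iSup (fun i => (hb i).le) hcond (rowCount_le x c)
    _ = 3 ^ ((1 : ℝ)/p) *
          (ENNReal.ofReal c * (⨆ i, ENNReal.ofReal (b i) * rowCount x c i) ^ ((1 : ℝ)/p)) := by
        rw [ENNReal.mul_rpow_of_nonneg _ _ (by positivity)]
        ring

theorem supRowNorm_mul_le_weakNormD {p : ℝ} (hp : 0 < p) {b : ℕ → ℝ} (hb : ∀ i, 0 < b i)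
    (x : Tri → ℝ) :
    supRowNorm p (fun q => b q.1.1 ^ ((1 : ℝ)/p) * x q) ≤ weakNormD p b x := by
  rw [weakNormD_eq_iSup, supRowNorm_mul_eq_iSup hp hb]
  gcongr
  exact iSup_le fun i => ENNReal.le_tsum i

/-- If `(b_i)` is strictly positive and either `(i+1) b_{i+1} ≤ b_i` for all `i`, or
`b_{i+1} ≥ (i+1) b_i` for all `i`, then `(Tx)(i,j) = b_i^{1/p} x(i,j)` defines a surjective
isomorphism of `ℓ^{p,∞}(D,α)` onto `(∑ ⊕ ℓ^{p,∞}(i))_{ℓ^∞}`, with `‖Tx‖ ≤ ‖x‖ ≤ 3^{1/p} ‖Tx‖`. -/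
theorem weakD_iso_supRow (p : ℝ) (hp : 1 < p) (b : ℕ → ℝ) (hb : ∀ i, 0 < b i)
    (hcond : (∀ i : ℕ, ((i : ℝ) + 1) * b (i + 1) ≤ b i) ∨
      (∀ i : ℕ, ((i : ℝ) + 1) * b i ≤ b (i + 1))) :
    (∀ x : Tri → ℝ,
      supRowNorm p (fun q => b q.1.1 ^ ((1 : ℝ)/p) * x q) ≤ weakNormD p b x ∧
      weakNormD p b x ≤
        (3 : ℝ≥0∞) ^ ((1 : ℝ)/p) * supRowNorm p (fun q => b q.1.1 ^ ((1 : ℝ)/p) * x q)) ∧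
    ∀ y : Tri → ℝ, supRowNorm p y ≠ ⊤ →
      ∃ x : Tri → ℝ, weakNormD p b x ≠ ⊤ ∧
        (fun q => b q.1.1 ^ ((1 : ℝ)/p) * x q) = y := by
  have hp₀ : 0 < p := one_pos.trans hp
  refine ⟨fun x => ⟨supRowNorm_mul_le_weakNormD hp₀ hb x,
    weakNormD_le_three_rpow_mul_supRowNorm hp₀ hb hcond x⟩, fun y hy => ?_⟩
  set x : Tri → ℝ := fun q => y q / b q.1.1 ^ ((1 : ℝ)/p)
  have hTx : (fun q => b q.1.1 ^ ((1 : ℝ)/p) * x q) = y :=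
    funext fun q => mul_div_cancel₀ _ (Real.rpow_pos_of_pos (hb _) _).ne'
  refine ⟨x, ne_top_of_le_ne_top ?_ (weakNormD_le_three_rpow_mul_supRowNorm hp₀ hb hcond x), hTx⟩
  rw [hTx]
  exact ENNReal.mul_ne_top (ENNReal.rpow_ne_top_of_nonneg (by positivity) ENNReal.ofNat_ne_top) hy
end

section
/- Counting lemma: Let Γ be a set, w : Γ → (0,∞) a weight, A ⊆ ℓ^{p,∞}(Γ,w) and Γ_1 ⊆ Γ with |A| > max(|Γ_1|, ℵ_0). Suppose there exist K < ∞ and r > 1 such that ‖∑_{x∈F} ε_x x‖ ≤ K |F|^{1/r} for all finite F ⊆ A and all signs ε_x = ±1. Then there exists A_1 ⊆ A with |A_1| = |A| and x·χ_{Γ_1} = 0 for every x ∈ A_1. -/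
/-
If infinitely many `x ∈ A` had `|x γ₀| > δ`, then for `n` of them, signed with `ε x = sign (x γ₀)`,
the sum would exceed `n δ` at `γ₀`, so its weak norm would be at least `n δ w(γ₀)^{1/p}`,
which beats `K n^{1/r}` for large `n` since `r > 1`. Hence each `γ ∈ Γ₁` is in the support of
only countably many `x ∈ A`, and the functions meeting `Γ₁` form a set of cardinality at most
`max(|Γ₁|, ℵ₀) < |A|`; removing them leaves a set of cardinality `|A|`.
-/

open ENNReal

/-- The weak `ℓ^p` quasi-norm on a weighted set. -/
noncomputable def weakNorm {Γ : Type*} (p : ℝ) (w : Γ → ℝ) (x : Γ → ℝ) : ℝ≥0∞ :=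
  ⨆ (c : ℝ) (_ : 0 < c),
    ENNReal.ofReal c * (∑' γ : {γ : Γ // c < |x γ|}, ENNReal.ofReal (w γ.1)) ^ ((1 : ℝ)/p)

open Filter Cardinal

def SignedSumBound {Γ : Type*} (p : ℝ) (w : Γ → ℝ) (A : Set (Γ → ℝ)) (K r : ℝ) : Prop :=
  ∀ F : Finset (Γ → ℝ), ↑F ⊆ A → ∀ ε : (Γ → ℝ) → ℝ,
    (∀ x ∈ F, ε x = 1 ∨ ε x = -1) →
    weakNorm p w (∑ x ∈ F, ε x • x) ≤ ENNReal.ofReal (K * (F.card : ℝ) ^ ((1 : ℝ)/r))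

lemma ofReal_mul_rpow_le_weakNorm {Γ : Type*} {p : ℝ} (hp : 0 ≤ p) {w : Γ → ℝ} {y : Γ → ℝ}
    {γ₀ : Γ} (hw : 0 ≤ w γ₀) {c : ℝ} (hc : 0 < c) (hcy : c < |y γ₀|) :
    ENNReal.ofReal (c * w γ₀ ^ ((1 : ℝ)/p)) ≤ weakNorm p w y := by
  have hp' : 0 ≤ (1 : ℝ)/p := by positivity
  have hsum : ENNReal.ofReal (w γ₀) ≤ ∑' γ : {γ : Γ // c < |y γ|}, ENNReal.ofReal (w γ.1) :=
    ENNReal.le_tsum (⟨γ₀, hcy⟩ : {γ : Γ // c < |y γ|})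
  rw [ENNReal.ofReal_mul hc.le, ← ENNReal.ofReal_rpow_of_nonneg hw hp', weakNorm]
  exact le_iSup₂_of_le c hc (mul_le_mul_right (ENNReal.rpow_le_rpow hsum hp') _)

lemma eventually_mul_rpow_lt_mul (K : ℝ) {a r : ℝ} (ha : 0 < a) (hr : 1 < r) :
    ∀ᶠ n : ℕ in atTop, K * (n : ℝ) ^ ((1 : ℝ)/r) < a * n := by
  have hexp : 0 < 1 - (1 : ℝ)/r := sub_pos.mpr ((div_lt_one (by linarith)).mpr hr)
  have hgrowth : Tendsto (fun n : ℕ => (n : ℝ) ^ (1 - (1 : ℝ)/r)) atTop atTop :=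
    (tendsto_rpow_atTop hexp).comp tendsto_natCast_atTop_atTop
  filter_upwards [hgrowth.eventually_gt_atTop (K / a), eventually_ge_atTop 1] with n hn hn1
  have hpos : (0 : ℝ) < n := by exact_mod_cast hn1
  rw [div_lt_iff₀ ha] at hn
  calc K * (n : ℝ) ^ ((1 : ℝ)/r) < a * n ^ (1 - (1 : ℝ)/r) * n ^ ((1 : ℝ)/r) :=
        mul_lt_mul_of_pos_right (by linarith) (Real.rpow_pos_of_pos hpos _)
    _ = a * n := by rw [mul_assoc, ← Real.rpow_add hpos, sub_add_cancel, Real.rpow_one]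

lemma sum_sign_smul_apply {Γ : Type*} (F : Finset (Γ → ℝ)) (γ₀ : Γ) :
    (∑ x ∈ F, (if 0 ≤ x γ₀ then (1 : ℝ) else -1) • x) γ₀ = ∑ x ∈ F, |x γ₀| := by
  rw [Finset.sum_apply]
  refine Finset.sum_congr rfl fun x _ => ?_
  split_ifs with h
  · simp [abs_of_nonneg h]
  · simp [abs_of_neg (not_le.mp h)]

lemma SignedSumBound.finite_setOf_lt_abs_apply {Γ : Type*} {p : ℝ} (hp : 0 ≤ p) {w : Γ → ℝ}
    {A : Set (Γ → ℝ)} {K r : ℝ} (hr : 1 < r) (hbound : SignedSumBound p w A K r) {γ₀ : Γ}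
    (hw : 0 < w γ₀) {δ : ℝ} (hδ : 0 < δ) :
    {x | x ∈ A ∧ δ < |x γ₀|}.Finite := by
  by_contra hinf
  have ha : 0 < δ * w γ₀ ^ ((1 : ℝ)/p) := mul_pos hδ (Real.rpow_pos_of_pos hw _)
  obtain ⟨n, hn, hn1⟩ :=
    ((eventually_mul_rpow_lt_mul K ha hr).and (eventually_ge_atTop 1)).exists
  obtain ⟨F, hFsub, rfl⟩ := Set.Infinite.exists_subset_card_eq hinf n
  have hFne : F.Nonempty := Finset.card_pos.mp hn1
  have hlarge : (F.card : ℝ) * δ < |(∑ x ∈ F, (if 0 ≤ x γ₀ then (1 : ℝ) else -1) • x) γ₀| := by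
    rw [sum_sign_smul_apply, abs_of_nonneg (Finset.sum_nonneg fun x _ => abs_nonneg _)]
    simpa using Finset.sum_lt_sum_of_nonempty hFne fun x hx => (hFsub hx).2
  have hsandwich := (ofReal_mul_rpow_le_weakNorm hp hw.le (by positivity) hlarge).trans
    (hbound F (fun x hx => (hFsub hx).1) _ fun x _ => by split_ifs <;> simp)
  have hpos : 0 < (F.card : ℝ) * δ * w γ₀ ^ ((1 : ℝ)/p) := by
    rw [mul_assoc]
    exact mul_pos (by exact_mod_cast hn1) ha
  rcases ENNReal.ofReal_le_ofReal_iff'.mp hsandwich with h | h <;> linarith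

lemma SignedSumBound.countable_setOf_apply_ne_zero {Γ : Type*} {p : ℝ} (hp : 0 ≤ p)
    {w : Γ → ℝ} {A : Set (Γ → ℝ)} {K r : ℝ} (hr : 1 < r) (hbound : SignedSumBound p w A K r)
    {γ₀ : Γ} (hw : 0 < w γ₀) :
    {x | x ∈ A ∧ x γ₀ ≠ 0}.Countable := by
  refine (Set.countable_iUnion fun n : ℕ => (hbound.finite_setOf_lt_abs_apply hp hr hw
    (Nat.one_div_pos_of_nat (n := n))).countable).mono ?_
  rintro x ⟨hxA, hx⟩
  obtain ⟨n, hn⟩ := exists_nat_one_div_lt (abs_pos.mpr hx)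
  exact Set.mem_iUnion.mpr ⟨n, hxA, hn⟩

universe u

lemma Cardinal.mk_biUnion_le_max_of_countable {ι α : Type u} {s : Set ι} {S : ι → Set α}
    (hS : ∀ i ∈ s, (S i).Countable) : #(⋃ i ∈ s, S i) ≤ max #s ℵ₀ :=
  calc #(⋃ i ∈ s, S i) ≤ #s * ⨆ i : s, #(S i) := mk_biUnion_le S s
    _ ≤ #s * ℵ₀ :=
        mul_le_mul' le_rfl (ciSup_le' fun i => mk_le_aleph0_iff.mpr (hS i i.2).to_subtype)
    _ ≤ max (max #s ℵ₀) ℵ₀ := mul_le_max _ _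
    _ = max #s ℵ₀ := by rw [max_assoc, max_self]

lemma Cardinal.mk_sdiff_eq_of_mk_lt {α : Type*} {A B : Set α} (hA : ℵ₀ ≤ #A) (hB : #B < #A) :
    #(A \ B : Set α) = #A := by
  refine le_antisymm (mk_le_mk_of_subset Set.sdiff_subset) (not_lt.mp fun hlt => ?_)
  exact (le_mk_sdiff_add_mk A B).not_gt (add_lt_of_lt hA hlt hB)

theorem counting_lemma_general {Γ : Type*} (p : ℝ) (hp : 1 < p) (w : Γ → ℝ) (hw : ∀ γ, 0 < w γ)
    (A : Set (Γ → ℝ)) (Γ₁ : Set Γ)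
    (hcard : max (Cardinal.mk Γ₁) Cardinal.aleph0 < Cardinal.mk A)
    (K r : ℝ) (hr : 1 < r)
    (hbound : ∀ F : Finset (Γ → ℝ), ↑F ⊆ A → ∀ ε : (Γ → ℝ) → ℝ,
      (∀ x ∈ F, ε x = 1 ∨ ε x = -1) →
      weakNorm p w (∑ x ∈ F, ε x • x) ≤ ENNReal.ofReal (K * (F.card : ℝ) ^ ((1 : ℝ)/r))) :
    ∃ A₁ ⊆ A, Cardinal.mk A₁ = Cardinal.mk A ∧ ∀ x ∈ A₁, ∀ γ ∈ Γ₁, x γ = 0 := by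
  set B := ⋃ γ ∈ Γ₁, {x | x ∈ A ∧ x γ ≠ 0}
  have hB : #B < #A := lt_of_le_of_lt (mk_biUnion_le_max_of_countable fun γ _ =>
    SignedSumBound.countable_setOf_apply_ne_zero (by linarith) hr hbound (hw γ)) hcard
  refine ⟨A \ B, Set.sdiff_subset,
    mk_sdiff_eq_of_mk_lt ((le_max_right _ _).trans hcard.le) hB, ?_⟩
  rintro x ⟨hxA, hxB⟩ γ hγ
  by_contra hx
  exact hxB (Set.mem_biUnion hγ ⟨hxA, hx⟩)

/-- Counting lemma: if `A ⊆ ℓ^{p,∞}(Γ,w)` with `|A| > max(|Γ₁|, ℵ₀)` and all signed sums over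
finite subsets of `A` are bounded by `K |F|^{1/r}` with `r > 1`, then some `A₁ ⊆ A` of full
cardinality consists of functions vanishing on `Γ₁`. -/
theorem counting_lemma {Γ : Type*} (p : ℝ) (hp : 1 < p) (w : Γ → ℝ) (hw : ∀ γ, 0 < w γ)
    (A : Set (Γ → ℝ)) (Γ₁ : Set Γ)
    (hA : ∀ x ∈ A, weakNorm p w x ≠ ⊤)
    (hcard : max (Cardinal.mk Γ₁) Cardinal.aleph0 < Cardinal.mk A)
    (K r : ℝ) (hr : 1 < r)
    (hbound : ∀ F : Finset (Γ → ℝ), ↑F ⊆ A → ∀ ε : (Γ → ℝ) → ℝ,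
      (∀ x ∈ F, ε x = 1 ∨ ε x = -1) →
      weakNorm p w (∑ x ∈ F, ε x • x) ≤ ENNReal.ofReal (K * (F.card : ℝ) ^ ((1 : ℝ)/r))) :
    ∃ A₁ ⊆ A, Cardinal.mk A₁ = Cardinal.mk A ∧ ∀ x ∈ A₁, ∀ γ ∈ Γ₁, x γ = 0 :=
  counting_lemma_general p hp w hw A Γ₁ hcard K r hr hbound
end

section
/- Glueing small atoms: let (Γ_n)_{n≥1} be pairwise disjoint sets with nondecreasing infinite cardinalities as in the construction, and define for x : ⋃_n (Γ_k × {n}) → ℝ the map Tx arising from replacing each atom (γ,n) of weight 2^{-n} (with γ ∈ Γ_k) by the set s(γ,n) = {(γ,n,l) : 1 ≤ l ≤ 2^{k-n-n_0+1}} of atoms of weight 2^{-k}. Then for every c > 0, the weighted measure of {|Tx| > c} equals 2^{1-n_0} times the weighted measure of {|x| > c}; hence T is an isomorphic embedding onto a subspace complemented by conditional expectation, with ‖Tx‖ = 2^{(1-n_0)/p} ‖x‖. -/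
open ENNReal

/-- A generic weak `L^p` quasi-norm for an atomic measure with weight `w`. -/
noncomputable def wgen {α : Type*} (p : ℝ) (w : α → ℝ≥0∞) (f : α → ℝ) : ℝ≥0∞ :=
  ⨆ (c : ℝ) (_ : 0 < c),
    ENNReal.ofReal c * (∑' a : {a : α // c < |f a|}, w a.1) ^ ((1 : ℝ)/p)

/-- Source index set: points `((k,γ),n)` with `γ ∈ Γ_k`, `n ≥ 1`, `k ≥ n₀ + n - 1`;
the atom `((k,γ),n)` has weight `2^{-n}`. -/
def SrcIdx (n₀ : ℕ) (Γ : ℕ → Type*) : Type _ :=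
  {q : (Σ k : ℕ, Γ k) × ℕ // 1 ≤ q.2 ∧ n₀ + q.2 - 1 ≤ q.1.1}

/-- Target index set: each source atom `((k,γ),n)` is replaced by the block
`s(γ,n)` of `2^{k+1-n-n₀}` atoms, each of weight `2^{-k}`. -/
def TgtIdx (n₀ : ℕ) (Γ : ℕ → Type*) : Type _ :=
  Σ q : SrcIdx n₀ Γ, Fin (2 ^ (q.1.1.1 + 1 - q.1.2 - n₀))

/-!
Splitting an atom of weight `2^{-n}` over `Γ_k` into `2^{k+1-n-n₀}` atoms of weight `2^{-k}`
preserves its mass up to the factor `2^{1-n₀}`, so every superlevel mass of a function that is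
constant on the blocks is multiplied by `2^{1-n₀}`, and the weak quasi-norm, a supremum over
levels, by `2^{(1-n₀)/p}`.

The weights are constant on blocks, so averaging over blocks is the conditional expectation onto
functions constant on blocks. If the average of `g` over a block exceeds `c`, then
`c/2 · |block| ≤ ∫_block |g| 1_{|g| > c/2}`. Cutting `{|g| > a}` into dyadic shells gives
`∫_{|g| > a} |g| ≤ 2 ∑_j a 2^j μ{|g| > a 2^j} ≤ 2 a^{1-p} ‖g‖^p / (1 - 2^{1-p})`, which is finite
because `p > 1`; together these bound the averaged function in weak `L^p`.
-/

section Distribution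

variable {α : Type*}

noncomputable def distribution (w : α → ℝ≥0∞) (f : α → ℝ) (t : ℝ) : ℝ≥0∞ :=
  ∑' a : {a // t < |f a|}, w a.1

theorem distribution_eq_tsum_indicator (w : α → ℝ≥0∞) (f : α → ℝ) (t : ℝ) :
    distribution w f t = ∑' a, {a | t < |f a|}.indicator w a :=
  tsum_subtype _ w

theorem wgen_eq_iSup (p : ℝ) (w : α → ℝ≥0∞) (f : α → ℝ) :
    wgen p w f = ⨆ (c : ℝ) (_ : 0 < c), ENNReal.ofReal c * distribution w f c ^ (1 / p) :=
  rfl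

theorem ofReal_mul_distribution_rpow_le_wgen (p : ℝ) (w : α → ℝ≥0∞) (f : α → ℝ) {c : ℝ}
    (hc : 0 < c) : ENNReal.ofReal c * distribution w f c ^ (1 / p) ≤ wgen p w f :=
  le_iSup₂ (f := fun c (_ : 0 < c) => ENNReal.ofReal c * distribution w f c ^ (1 / p)) c hc

theorem wgen_eq_rpow_mul_of_distribution_eq {β : Type*} {p : ℝ} (hp : 0 ≤ p)
    {w : α → ℝ≥0∞} {f : α → ℝ} {w' : β → ℝ≥0∞} {f' : β → ℝ} {r : ℝ≥0∞}
    (h : ∀ c, 0 < c → distribution w' f' c = r * distribution w f c) :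
    wgen p w' f' = r ^ (1 / p) * wgen p w f := by
  simp only [wgen_eq_iSup, ENNReal.mul_iSup]
  refine iSup_congr fun c => iSup_congr fun hc => ?_
  rw [h c hc, ENNReal.mul_rpow_of_nonneg _ _ (one_div_nonneg.mpr hp), mul_left_comm]

theorem ENNReal.mul_rpow_one_div_le_iff {a d x : ℝ≥0∞} {p : ℝ} (ha₀ : a ≠ 0) (ha : a ≠ ∞)
    (hp : 0 < p) : a * d ^ (1 / p) ≤ x ↔ a * d ≤ a ^ (1 - p) * x ^ p := by
  rw [← ENNReal.rpow_le_rpow_iff hp, ENNReal.mul_rpow_of_nonneg _ _ hp.le, ← ENNReal.rpow_mul,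
    one_div_mul_cancel hp.ne', ENNReal.rpow_one,
    ← ENNReal.mul_le_mul_iff_right (ENNReal.rpow_pos (pos_iff_ne_zero.2 ha₀) ha).ne'
      (ENNReal.rpow_ne_top_of_ne_zero ha₀ ha (y := 1 - p)),
    ← mul_assoc, ← ENNReal.rpow_add _ _ ha₀ ha, sub_add_cancel, ENNReal.rpow_one]

theorem ofReal_le_two_mul_tsum_dyadic {a r : ℝ} (ha : 0 < a) (har : a < r) :
    ENNReal.ofReal r ≤
      2 * ∑' j : ℕ, if a * 2 ^ j < r then ENNReal.ofReal (a * 2 ^ j) else 0 := by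
  have hex : ∃ n : ℕ, r ≤ a * 2 ^ n := by
    obtain ⟨n, hn⟩ := pow_unbounded_of_one_lt (r / a) one_lt_two
    exact ⟨n, by rw [div_lt_iff₀ ha] at hn; linarith⟩
  have hpos : Nat.find hex ≠ 0 := fun h => by
    have := Nat.find_spec hex
    rw [h, pow_zero, mul_one] at this
    linarith
  obtain ⟨J, hJ⟩ := Nat.exists_eq_succ_of_ne_zero hpos
  have hlt : a * 2 ^ J < r := not_le.mp (Nat.find_min hex (by omega))
  have hle : r ≤ 2 * (a * 2 ^ J) := by
    have := Nat.find_spec hex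
    rw [hJ, pow_succ] at this
    linarith
  calc ENNReal.ofReal r ≤ ENNReal.ofReal (2 * (a * 2 ^ J)) := ENNReal.ofReal_le_ofReal hle
    _ = 2 * ENNReal.ofReal (a * 2 ^ J) := by rw [ENNReal.ofReal_mul zero_le_two]; norm_num
    _ ≤ _ := by
      gcongr
      exact (if_pos hlt).symm.le.trans (ENNReal.le_tsum J)

theorem tsum_mul_ite_le_two_mul_tsum_dyadic (w : α → ℝ≥0∞) (g : α → ℝ) {a : ℝ} (ha : 0 < a) :
    ∑' y, w y * (if a < |g y| then ENNReal.ofReal |g y| else 0) ≤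
      2 * ∑' j : ℕ, ENNReal.ofReal (a * 2 ^ j) * distribution w g (a * 2 ^ j) := by
  calc ∑' y, w y * (if a < |g y| then ENNReal.ofReal |g y| else 0)
      ≤ ∑' y, w y *
          (2 * ∑' j : ℕ, if a * 2 ^ j < |g y| then ENNReal.ofReal (a * 2 ^ j) else 0) := by
        gcongr with y
        split_ifs with hy
        · exact ofReal_le_two_mul_tsum_dyadic ha hy
        · exact zero_le
    _ = 2 * ∑' j : ℕ, ∑' y,
          w y * (if a * 2 ^ j < |g y| then ENNReal.ofReal (a * 2 ^ j) else 0) := by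
        simp_rw [mul_left_comm (w _), ENNReal.tsum_mul_left, ← ENNReal.tsum_mul_left (a := w _)]
        rw [ENNReal.tsum_comm]
    _ = _ := by
        congr 1
        refine tsum_congr fun j => ?_
        rw [distribution_eq_tsum_indicator, ← ENNReal.tsum_mul_left]
        refine tsum_congr fun y => ?_
        by_cases hy : a * 2 ^ j < |g y| <;> simp [hy, mul_comm]

theorem tsum_mul_ite_le_of_one_lt {p : ℝ} (hp : 1 < p) (w : α → ℝ≥0∞) (g : α → ℝ) {a : ℝ}
    (ha : 0 < a) :
    ∑' y, w y * (if a < |g y| then ENNReal.ofReal |g y| else 0) ≤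
      2 * (1 - 2 ^ (1 - p))⁻¹ * ENNReal.ofReal a ^ (1 - p) * wgen p w g ^ p := by
  have hterm (j : ℕ) : ENNReal.ofReal (a * 2 ^ j) * distribution w g (a * 2 ^ j) ≤
      ENNReal.ofReal a ^ (1 - p) * ((2 : ℝ≥0∞) ^ (1 - p)) ^ j * wgen p w g ^ p := by
    have hpos : 0 < a * 2 ^ j := by positivity
    have hsplit : ENNReal.ofReal (a * 2 ^ j) ^ (1 - p) =
        ENNReal.ofReal a ^ (1 - p) * ((2 : ℝ≥0∞) ^ (1 - p)) ^ j := by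
      rw [ENNReal.ofReal_mul ha.le, ENNReal.ofReal_pow zero_le_two,
        ENNReal.mul_rpow_of_ne_top ENNReal.ofReal_ne_top (by simp), ← ENNReal.rpow_natCast,
        ← ENNReal.rpow_natCast, ← ENNReal.rpow_mul, ← ENNReal.rpow_mul, mul_comm (j : ℝ)]
      norm_num
    rw [← hsplit]
    exact (ENNReal.mul_rpow_one_div_le_iff (ENNReal.ofReal_pos.2 hpos).ne' ENNReal.ofReal_ne_top
      (by linarith)).1 (ofReal_mul_distribution_rpow_le_wgen p w g hpos)
  calc _ ≤ 2 * ∑' j : ℕ, ENNReal.ofReal (a * 2 ^ j) * distribution w g (a * 2 ^ j) :=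
        tsum_mul_ite_le_two_mul_tsum_dyadic w g ha
    _ ≤ 2 * ∑' j : ℕ, ENNReal.ofReal a ^ (1 - p) * ((2 : ℝ≥0∞) ^ (1 - p)) ^ j *
          wgen p w g ^ p := by
        gcongr 2 * ?_
        exact ENNReal.tsum_le_tsum hterm
    _ = _ := by
        rw [ENNReal.tsum_mul_right, ENNReal.tsum_mul_left, ENNReal.tsum_geometric]
        ring

end Distribution

theorem half_mul_card_le_sum_ite {β : Type*} [Fintype β] (g : β → ℝ) {c : ℝ} (hc : 0 ≤ c)
    (hg : c < (Fintype.card β : ℝ)⁻¹ * ∑ l, |g l|) :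
    c / 2 * Fintype.card β ≤ ∑ l, if c / 2 < |g l| then |g l| else 0 := by
  have hmass : c * Fintype.card β ≤ ∑ l, |g l| := by
    rcases (Nat.cast_nonneg (Fintype.card β) : (0 : ℝ) ≤ _).eq_or_lt with h | h
    · rw [← h, mul_zero]
      exact Finset.sum_nonneg fun l _ => abs_nonneg _
    · rw [inv_mul_eq_div, lt_div_iff₀ h] at hg
      exact hg.le
  have hsplit : ∑ l, |g l| ≤ ∑ l, (c / 2 + if c / 2 < |g l| then |g l| else 0) :=
    Finset.sum_le_sum fun l _ => by split_ifs with h <;> linarith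
  rw [Finset.sum_add_distrib, Finset.sum_const, Finset.card_univ, nsmul_eq_mul] at hsplit
  linarith

section Block

variable {ι : Type*} {F : ι → Type*} [∀ i, Fintype (F i)]

theorem ENNReal.tsum_subtype_sigma_eq_tsum_sum (P : ι → Prop) (f : (Σ i, F i) → ℝ≥0∞) :
    ∑' y : {y : Σ i, F i // P y.1}, f y.1 = ∑' i : {i // P i}, ∑ l, f ⟨i.1, l⟩ := by
  rw [← (Equiv.subtypeSigmaEquiv F P).symm.tsum_eq, ENNReal.tsum_sigma']
  exact tsum_congr fun i => tsum_fintype _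

theorem distribution_comp_fst (v : ι → ℝ≥0∞) (x : ι → ℝ) (c : ℝ) :
    distribution (fun y : Σ i, F i => v y.1) (fun y => x y.1) c =
      ∑' i : {i // c < |x i|}, Fintype.card (F i.1) * v i.1 := by
  refine (ENNReal.tsum_subtype_sigma_eq_tsum_sum (fun i => c < |x i|) fun y => v y.1).trans ?_
  simp [Finset.sum_const, nsmul_eq_mul]

variable (F) in
noncomputable def blockAverage : ((Σ i, F i) → ℝ) →ₗ[ℝ] (ι → ℝ) where
  toFun g i := (Fintype.card (F i) : ℝ)⁻¹ * ∑ l, g ⟨i, l⟩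
  map_add' g h := by
    ext i
    simp [Finset.sum_add_distrib, mul_add]
  map_smul' r g := by
    ext i
    simp only [Pi.smul_apply, smul_eq_mul, ← Finset.mul_sum, RingHom.id_apply]
    ring

theorem blockAverage_apply (g : (Σ i, F i) → ℝ) (i : ι) :
    blockAverage F g i = (Fintype.card (F i) : ℝ)⁻¹ * ∑ l, g ⟨i, l⟩ :=
  rfl

theorem blockAverage_comp_fst [∀ i, Nonempty (F i)] (x : ι → ℝ) :
    blockAverage F (fun y => x y.1) = x := by
  ext i
  simp [blockAverage_apply]

theorem abs_blockAverage_le (g : (Σ i, F i) → ℝ) (i : ι) :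
    |blockAverage F g i| ≤ (Fintype.card (F i) : ℝ)⁻¹ * ∑ l, |g ⟨i, l⟩| := by
  rw [blockAverage_apply, abs_mul, abs_inv, Nat.abs_cast]
  gcongr
  exact Finset.abs_sum_le_sum_abs _ _

theorem ofReal_half_mul_distribution_blockAverage_le (v : ι → ℝ≥0∞) (g : (Σ i, F i) → ℝ)
    {c : ℝ} (hc : 0 ≤ c) :
    ENNReal.ofReal (c / 2) *
        distribution (fun y : Σ i, F i => v y.1) (fun y => blockAverage F g y.1) c ≤
      ∑' y, v y.1 * (if c / 2 < |g y| then ENNReal.ofReal |g y| else 0) := by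
  have hblock (i : {i // c < |blockAverage F g i|}) :
      ENNReal.ofReal (c / 2) * (Fintype.card (F i.1) * v i.1) ≤
        ∑ l, v i.1 * (if c / 2 < |g ⟨i.1, l⟩| then ENNReal.ofReal |g ⟨i.1, l⟩| else 0) := by
    have h := half_mul_card_le_sum_ite (fun l => g ⟨i.1, l⟩) hc
      (i.2.trans_le (abs_blockAverage_le g i.1))
    calc ENNReal.ofReal (c / 2) * (Fintype.card (F i.1) * v i.1)
        = v i.1 * ENNReal.ofReal (c / 2 * Fintype.card (F i.1)) := by
          rw [ENNReal.ofReal_mul (by positivity), ENNReal.ofReal_natCast]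
          ring
      _ ≤ v i.1 * ENNReal.ofReal
            (∑ l, if c / 2 < |g ⟨i.1, l⟩| then |g ⟨i.1, l⟩| else 0) := by
          gcongr
      _ = _ := by
          rw [ENNReal.ofReal_sum_of_nonneg fun l _ => by split_ifs <;> positivity,
            Finset.mul_sum]
          simp only [apply_ite ENNReal.ofReal, ENNReal.ofReal_zero]
  rw [distribution_comp_fst, ← ENNReal.tsum_mul_left]
  calc _ ≤ ∑' i : {i // c < |blockAverage F g i|},
        ∑ l, v i.1 * (if c / 2 < |g ⟨i.1, l⟩| then ENNReal.ofReal |g ⟨i.1, l⟩| else 0) :=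
        ENNReal.tsum_le_tsum hblock
    _ = ∑' y : {y : Σ i, F i // c < |blockAverage F g y.1|},
          v y.1.1 * (if c / 2 < |g y.1| then ENNReal.ofReal |g y.1| else 0) :=
        (ENNReal.tsum_subtype_sigma_eq_tsum_sum (fun i => c < |blockAverage F g i|)
          fun y => v y.1 * (if c / 2 < |g y| then ENNReal.ofReal |g y| else 0)).symm
    _ ≤ _ := ENNReal.tsum_comp_le_tsum_of_injective Subtype.val_injective
        fun y => v y.1 * (if c / 2 < |g y| then ENNReal.ofReal |g y| else 0)

theorem wgen_blockAverage_le {p : ℝ} (hp : 1 < p) (v : ι → ℝ≥0∞) (g : (Σ i, F i) → ℝ) :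
    wgen p (fun y : Σ i, F i => v y.1) (fun y => blockAverage F g y.1) ≤
      2 * (2 * (1 - 2 ^ (1 - p))⁻¹) ^ (1 / p) * wgen p (fun y : Σ i, F i => v y.1) g := by
  set A := wgen p (fun y : Σ i, F i => v y.1) g
  set K : ℝ≥0∞ := 2 * (1 - 2 ^ (1 - p))⁻¹
  rw [wgen_eq_iSup]
  refine iSup₂_le fun c hc => ?_
  have hc₂ : 0 < c / 2 := by positivity
  have hKA : (K ^ (1 / p) * A) ^ p = K * A ^ p := by
    rw [ENNReal.mul_rpow_of_nonneg _ _ (by linarith), ← ENNReal.rpow_mul,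
      one_div_mul_cancel (by linarith), ENNReal.rpow_one]
  have hhalf : ENNReal.ofReal (c / 2) *
      distribution (fun y : Σ i, F i => v y.1) (fun y => blockAverage F g y.1) c ^ (1 / p) ≤
        K ^ (1 / p) * A := by
    rw [ENNReal.mul_rpow_one_div_le_iff (ENNReal.ofReal_pos.2 hc₂).ne' ENNReal.ofReal_ne_top
      (by linarith), hKA]
    calc _ ≤ _ := ofReal_half_mul_distribution_blockAverage_le v g hc.le
      _ ≤ _ := tsum_mul_ite_le_of_one_lt hp _ g hc₂
      _ = _ := by ring
  have hc_eq : ENNReal.ofReal c = 2 * ENNReal.ofReal (c / 2) := by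
    rw [← ENNReal.ofReal_ofNat 2, ← ENNReal.ofReal_mul zero_le_two]
    congr 1
    ring
  calc _ ≤ 2 * (K ^ (1 / p) * A) := by
        rw [hc_eq, mul_assoc]
        gcongr 2 * ?_
    _ = _ := by ring

end Block

theorem card_block_mul_weight {n₀ : ℕ} {Γ : ℕ → Type*} (q : SrcIdx n₀ Γ) :
    ((2 ^ (q.1.1.1 + 1 - q.1.2 - n₀) : ℕ) : ℝ≥0∞) * 2 ^ (-(q.1.1.1 : ℤ)) =
      2 ^ ((1 : ℤ) - n₀) * 2 ^ (-(q.1.2 : ℤ)) := by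
  obtain ⟨hn, hk⟩ := q.2
  rw [Nat.cast_pow, Nat.cast_ofNat, ← zpow_natCast,
    ← ENNReal.zpow_add two_ne_zero ENNReal.ofNat_ne_top,
    ← ENNReal.zpow_add two_ne_zero ENNReal.ofNat_ne_top]
  congr 1
  omega

theorem distribution_glue {n₀ : ℕ} {Γ : ℕ → Type*} (x : SrcIdx n₀ Γ → ℝ) (c : ℝ) :
    distribution (fun y : TgtIdx n₀ Γ => (2 : ℝ≥0∞) ^ (-(y.1.1.1.1 : ℤ))) (fun y => x y.1) c =
      2 ^ ((1 : ℤ) - n₀) *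
        distribution (fun q : SrcIdx n₀ Γ => (2 : ℝ≥0∞) ^ (-(q.1.2 : ℤ))) x c := by
  refine (distribution_comp_fst
    (F := fun q : SrcIdx n₀ Γ => Fin (2 ^ (q.1.1.1 + 1 - q.1.2 - n₀)))
    (fun q => 2 ^ (-(q.1.1.1 : ℤ))) x c).trans ?_
  rw [distribution, ← ENNReal.tsum_mul_left]
  exact tsum_congr fun q => by rw [Fintype.card_fin]; exact card_block_mul_weight q.1

theorem glueing_small_atoms_general (p : ℝ) (hp : 1 < p) (n₀ : ℕ)
    (Γ : ℕ → Type*) :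
    (∀ x : SrcIdx n₀ Γ → ℝ, ∀ c : ℝ, 0 < c →
      (∑' y : {y : TgtIdx n₀ Γ // c < |x y.1|}, (2 : ℝ≥0∞) ^ (-(y.1.1.1.1.1 : ℤ))) =
        (2 : ℝ≥0∞) ^ ((1 : ℤ) - (n₀ : ℤ)) *
          ∑' q : {q : SrcIdx n₀ Γ // c < |x q|}, (2 : ℝ≥0∞) ^ (-(q.1.1.2 : ℤ))) ∧
    (∀ x : SrcIdx n₀ Γ → ℝ,
      wgen p (fun y : TgtIdx n₀ Γ => (2 : ℝ≥0∞) ^ (-(y.1.1.1.1 : ℤ))) (fun y => x y.1) =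
        (2 : ℝ≥0∞) ^ (((1 : ℝ) - (n₀ : ℝ))/p) *
          wgen p (fun q : SrcIdx n₀ Γ => (2 : ℝ≥0∞) ^ (-(q.1.2 : ℤ))) x) ∧
    ∃ P : (TgtIdx n₀ Γ → ℝ) →ₗ[ℝ] (SrcIdx n₀ Γ → ℝ),
      (∀ x : SrcIdx n₀ Γ → ℝ, P (fun y => x y.1) = x) ∧
      ∃ C : ℝ≥0∞, C ≠ ⊤ ∧ ∀ g : TgtIdx n₀ Γ → ℝ,
        wgen p (fun y : TgtIdx n₀ Γ => (2 : ℝ≥0∞) ^ (-(y.1.1.1.1 : ℤ))) (fun y => (P g) y.1) ≤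
          C * wgen p (fun y : TgtIdx n₀ Γ => (2 : ℝ≥0∞) ^ (-(y.1.1.1.1 : ℤ))) g := by
  have hKtop : (1 - (2 : ℝ≥0∞) ^ (1 - p))⁻¹ ≠ ∞ := ENNReal.inv_ne_top.mpr
    (tsub_pos_of_lt (ENNReal.rpow_lt_one_of_one_lt_of_neg one_lt_two (by linarith))).ne'
  have hscale : ((2 : ℝ≥0∞) ^ ((1 : ℤ) - n₀)) ^ (1 / p) = 2 ^ (((1 : ℝ) - n₀) / p) := by
    rw [← ENNReal.rpow_intCast, ← ENNReal.rpow_mul]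
    push_cast
    ring_nf
  refine ⟨fun x c _ => distribution_glue x c, fun x => ?_,
    blockAverage (fun q : SrcIdx n₀ Γ => Fin (2 ^ (q.1.1.1 + 1 - q.1.2 - n₀))),
    blockAverage_comp_fst, ?_⟩
  · rw [wgen_eq_rpow_mul_of_distribution_eq (by linarith) fun c _ => distribution_glue x c, hscale]
  · refine ⟨2 * (2 * (1 - 2 ^ (1 - p))⁻¹) ^ (1 / p), ?_,
      wgen_blockAverage_le hp fun q : SrcIdx n₀ Γ => (2 : ℝ≥0∞) ^ (-(q.1.1.1 : ℤ))⟩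
    exact ENNReal.mul_ne_top ENNReal.ofNat_ne_top <| ENNReal.rpow_ne_top_of_nonneg (by positivity)
      (ENNReal.mul_ne_top ENNReal.ofNat_ne_top hKtop)

/-- Glueing small atoms: replacing each atom of weight `2^{-n}` (sitting over `Γ_k`) by a
block of `2^{k-n-n₀+1}` atoms of weight `2^{-k}` multiplies all distribution functions by
exactly `2^{1-n₀}`; hence `T` is an embedding with `‖Tx‖ = 2^{(1-n₀)/p} ‖x‖`, whose range is
complemented by a bounded (conditional expectation) projection. -/
theorem glueing_small_atoms (p : ℝ) (hp : 1 < p) (n₀ : ℕ) (hn₀ : 1 ≤ n₀)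
    (Γ : ℕ → Type*) :
    (∀ x : SrcIdx n₀ Γ → ℝ, ∀ c : ℝ, 0 < c →
      (∑' y : {y : TgtIdx n₀ Γ // c < |x y.1|}, (2 : ℝ≥0∞) ^ (-(y.1.1.1.1.1 : ℤ))) =
        (2 : ℝ≥0∞) ^ ((1 : ℤ) - (n₀ : ℤ)) *
          ∑' q : {q : SrcIdx n₀ Γ // c < |x q|}, (2 : ℝ≥0∞) ^ (-(q.1.1.2 : ℤ))) ∧
    (∀ x : SrcIdx n₀ Γ → ℝ,
      wgen p (fun y : TgtIdx n₀ Γ => (2 : ℝ≥0∞) ^ (-(y.1.1.1.1 : ℤ))) (fun y => x y.1) =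
        (2 : ℝ≥0∞) ^ (((1 : ℝ) - (n₀ : ℝ))/p) *
          wgen p (fun q : SrcIdx n₀ Γ => (2 : ℝ≥0∞) ^ (-(q.1.2 : ℤ))) x) ∧
    ∃ P : (TgtIdx n₀ Γ → ℝ) →ₗ[ℝ] (SrcIdx n₀ Γ → ℝ),
      (∀ x : SrcIdx n₀ Γ → ℝ, P (fun y => x y.1) = x) ∧
      ∃ C : ℝ≥0∞, C ≠ ⊤ ∧ ∀ g : TgtIdx n₀ Γ → ℝ,
        wgen p (fun y : TgtIdx n₀ Γ => (2 : ℝ≥0∞) ^ (-(y.1.1.1.1 : ℤ))) (fun y => (P g) y.1) ≤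
          C * wgen p (fun y : TgtIdx n₀ Γ => (2 : ℝ≥0∞) ^ (-(y.1.1.1.1 : ℤ))) g :=
  glueing_small_atoms_general p hp n₀ Γ
end
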